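/- Let X ⊆ ℝ^m and Y ⊆ ℝ^n be nonempty compact convex sets and let f : ℝ^n × ℝ^m → ℝ be convex and differentiable on Y × X. Define 𝒬(x) = inf_{y ∈ Y} f(y, x) for x ∈ X. Fix x̄ ∈ X, ε ≥ 0, and let ŷ ∈ Y be an ε-optimal solution, i.e., f(ŷ, x̄) ≤ 𝒬(x̄) + ε. Set η = max_{y ∈ Y} ⟨∇_y f(ŷ, x̄), ŷ − y⟩ (which is nonnegative). Then the affine function C(x) = f(ŷ, x̄) − η + ⟨∇_x f(ŷ, x̄), x − x̄⟩ satisfies 𝒬(x) ≥ C(x) for every x ∈ X, and 𝒬(x̄) − C(x̄) ≤ η. -/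

import Mathlib

open scoped RealInnerProductSpace Matrix
noncomputable section

/-- `ℝ^k` with the Euclidean norm. -/
abbrev E (k : ℕ) := EuclideanSpace ℝ (Fin k)

/-- The value function `𝒬(x) = inf_{y ∈ Y} f(y, x)` (as an extended real). -/
def Qfix {n m : ℕ} (Y : Set (E n)) (f : E n × E m → ℝ) (x : E m) : EReal :=
  ⨅ (y : E n) (_ : y ∈ Y), ((f (y, x) : ℝ) : EReal)

/-! The cut is the first-order lower bound of `f` at `(ŷ, x̄)`, minimized over `y ∈ Y`: the
`y`-part `⟪∇_y f(ŷ, x̄), y - ŷ⟫` is at least `-η` by the choice of `η`, so the bound survives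
the infimum defining `𝒬`. The gap at `x̄` is at most `η` simply because `𝒬(x̄) ≤ f(ŷ, x̄)`. -/

open Set AffineMap

lemma ConvexOn.add_fderiv_sub_le {F : Type*} [NormedAddCommGroup F] [NormedSpace ℝ F]
    {S : Set F} {f : F → ℝ} {φ : F →L[ℝ] ℝ} {p z : F}
    (hf : ConvexOn ℝ S f) (hp : p ∈ S) (hz : z ∈ S) (hd : HasFDerivAt f φ p) :
    f p + φ (z - p) ≤ f z := by
  have hsegment : ConvexOn ℝ (Icc (0 : ℝ) 1) (f ∘ lineMap p z) :=
    (hf.comp_affineMap (lineMap p z : ℝ →ᵃ[ℝ] F)).subset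
      (fun _ ht => hf.1.lineMap_mem hp hz ht) (convex_Icc 0 1)
  have hderiv : HasDerivAt (f ∘ lineMap p z) (φ (z - p)) (0 : ℝ) := by
    have hd0 : HasFDerivAt f φ (lineMap p z (0 : ℝ)) := by rwa [lineMap_apply_zero]
    exact hd0.comp_hasDerivAt 0 hasDerivAt_lineMap
  have hslope := hsegment.le_slope_of_hasDerivAt (left_mem_Icc.2 zero_le_one)
    (right_mem_Icc.2 zero_le_one) zero_lt_one hderiv
  simp only [slope, Function.comp_apply, lineMap_apply_zero, lineMap_apply_one, sub_zero,
    inv_one, vsub_eq_sub, one_smul] at hslope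
  linarith

section PartialGradient

variable {F G : Type*} [NormedAddCommGroup F] [NormedAddCommGroup G] {f : F × G → ℝ} {y : F}
  {x : G}

lemma inner_gradient_fst_eq_fderiv [InnerProductSpace ℝ F] [CompleteSpace F] [NormedSpace ℝ G]
    (hf : DifferentiableAt ℝ f (y, x)) (u : F) :
    ⟪gradient (fun y' => f (y', x)) y, u⟫ = fderiv ℝ f (y, x) (u, 0) := by
  have hd : HasFDerivAt (fun y' => f (y', x))
      ((fderiv ℝ f (y, x)).comp (ContinuousLinearMap.inl ℝ F G)) y :=
    hf.hasFDerivAt.comp y ((hasFDerivAt_id y).prodMk (hasFDerivAt_const x y))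
  rw [gradient, hd.fderiv, InnerProductSpace.toDual_symm_apply]
  rfl

lemma inner_gradient_snd_eq_fderiv [NormedSpace ℝ F] [InnerProductSpace ℝ G] [CompleteSpace G]
    (hf : DifferentiableAt ℝ f (y, x)) (w : G) :
    ⟪gradient (fun x' => f (y, x')) x, w⟫ = fderiv ℝ f (y, x) (0, w) := by
  have hd : HasFDerivAt (fun x' => f (y, x'))
      ((fderiv ℝ f (y, x)).comp (ContinuousLinearMap.inr ℝ F G)) x :=
    hf.hasFDerivAt.comp x ((hasFDerivAt_const y x).prodMk (hasFDerivAt_id x))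
  rw [gradient, hd.fderiv, InnerProductSpace.toDual_symm_apply]
  rfl

lemma ConvexOn.add_inner_partial_gradients_le [InnerProductSpace ℝ F] [CompleteSpace F]
    [InnerProductSpace ℝ G] [CompleteSpace G] {S : Set (F × G)} {y' : F} {x' : G}
    (hf : ConvexOn ℝ S f) (hp : (y, x) ∈ S) (hz : (y', x') ∈ S)
    (hd : DifferentiableAt ℝ f (y, x)) :
    f (y, x) + ⟪gradient (fun v => f (v, x)) y, y' - y⟫
      + ⟪gradient (fun w => f (y, w)) x, x' - x⟫ ≤ f (y', x') := by
  have hsplit : (y', x') - (y, x) = (y' - y, 0) + (0, x' - x) := by simp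
  have hkey := hf.add_fderiv_sub_le hp hz hd.hasFDerivAt
  rwa [hsplit, map_add, ← inner_gradient_fst_eq_fderiv hd, ← inner_gradient_snd_eq_fderiv hd,
    ← add_assoc] at hkey

end PartialGradient

lemma le_Qfix_of_forall_le {n m : ℕ} {Y : Set (E n)} {f : E n × E m → ℝ} {x : E m} {c : ℝ}
    (h : ∀ y ∈ Y, c ≤ f (y, x)) : (c : EReal) ≤ Qfix Y f x :=
  le_iInf₂ fun y hy => EReal.coe_le_coe (h y hy)

lemma Qfix_le_of_mem {n m : ℕ} {Y : Set (E n)} {f : E n × E m → ℝ} {x : E m} {y : E n}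
    (hy : y ∈ Y) : Qfix Y f x ≤ f (y, x) :=
  iInf₂_le y hy

theorem inexact_cut_fixed_feasible_set
    {n m : ℕ} (X : Set (E m)) (Y : Set (E n))
    (f : E n × E m → ℝ)
    (hconv : ConvexOn ℝ (Y ×ˢ X) f)
    (hdiff : ∀ pt ∈ Y ×ˢ X, DifferentiableAt ℝ f pt)
    (xb : E m) (hxb : xb ∈ X)
    (yh : E n) (hyh : yh ∈ Y)
    (η : ℝ)
    (hη : IsGreatest
      ((fun y : E n => ⟪gradient (fun y' => f (y', xb)) yh, yh - y⟫) '' Y) η) :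
    0 ≤ η ∧
    (∀ x ∈ X,
      ((f (yh, xb) - η + ⟪gradient (fun x' => f (yh, x')) xb, x - xb⟫ : ℝ) : EReal)
        ≤ Qfix Y f x) ∧
    Qfix Y f xb ≤
      ((f (yh, xb) - η + ⟪gradient (fun x' => f (yh, x')) xb, xb - xb⟫ + η : ℝ) : EReal) := by
  have hbase : (yh, xb) ∈ Y ×ˢ X := ⟨hyh, hxb⟩
  refine ⟨hη.2 ⟨yh, hyh, by simp⟩, fun x hx => le_Qfix_of_forall_le fun y hy => ?_, ?_⟩
  · have hgrad := hconv.add_inner_partial_gradients_le hbase (mk_mem_prod hy hx)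
      (hdiff _ hbase)
    have hη_ge : ⟪gradient (fun y' => f (y', xb)) yh, yh - y⟫ ≤ η := hη.2 ⟨y, hy, rfl⟩
    rw [← neg_sub yh y, inner_neg_right] at hgrad
    linarith
  · simpa using Qfix_le_of_mem (f := f) (x := xb) hyh
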